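/- arXiv:quant-ph/0307151 — 3 statements merged into one kernel-verified Lean document; each statement's English description precedes it below -/
import Mathlib

section
/- Let W be an entanglement witness on C^2 ⊗ C^2 with W = W^T = W^{T_B}. If ρ is a two-qubit state with Tr(Wρ) < 0, then the operator Ω = (ρ + ρ^{T_A} + ρ^{T_B} + ρ^T)/4 is not positive semidefinite. -/
open Matrix Complex BigOperators Kronecker ComplexOrder

noncomputable section

/-- The space of two-qubit operators. -/
abbrev Qubit2 := Matrix (Fin 2 × Fin 2) (Fin 2 × Fin 2) ℂ

/-- Tensor product of two vectors. -/
def tens {m n : Type*} (u : m → ℂ) (v : n → ℂ) : m × n → ℂ := fun p => u p.1 * v p.2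

/-- Outer product |v⟩⟨v|. -/
def outer {m : Type*} [Fintype m] (v : m → ℂ) : Matrix m m ℂ := Matrix.vecMulVec v (star v)

/-- Partial transpose with respect to the second factor (computational basis). -/
def ptB (ρ : Qubit2) : Qubit2 := fun p q => ρ (p.1, q.2) (q.1, p.2)

/-- Partial transpose with respect to the first factor (computational basis). -/
def ptA (ρ : Qubit2) : Qubit2 := fun p q => ρ (q.1, p.2) (p.1, q.2)

/-- A two-qubit separable state: finite convex combination of product pure states. -/
def SepState (σ : Qubit2) : Prop :=
  ∃ (n : ℕ) (q : Fin n → ℝ) (φ Φ : Fin n → Fin 2 → ℂ),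
    (∀ i, 0 ≤ q i) ∧ (∑ i, q i) = 1 ∧
    (∀ i, star (φ i) ⬝ᵥ φ i = 1) ∧ (∀ i, star (Φ i) ⬝ᵥ Φ i = 1) ∧
    σ = ∑ i, (q i : ℂ) • outer (tens (φ i) (Φ i))

def σx : Matrix (Fin 2) (Fin 2) ℂ := !![0, 1; 1, 0]
def σy : Matrix (Fin 2) (Fin 2) ℂ := !![0, -I; I, 0]
def σz : Matrix (Fin 2) (Fin 2) ℂ := !![1, 0; 0, -1]

/-- The four Pauli matrices σ_0 = I, σ_x, σ_y, σ_z. -/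
def pauli : Fin 4 → Matrix (Fin 2) (Fin 2) ℂ := ![1, σx, σy, σz]

/-- The three Pauli matrices σ_0 = I, σ_x, σ_z. -/
def pauli3 : Fin 3 → Matrix (Fin 2) (Fin 2) ℂ := ![1, σx, σz]

/-- Ω = (ρ + ρ^{T_A} + ρ^{T_B} + ρ^T)/4. -/
def omegaOf (ρ : Qubit2) : Qubit2 := ((1 : ℂ)/4) • (ρ + ptA ρ + ptB ρ + ρᵀ)

/-- Conditional mutual information I(A;B|E) of an (unnormalized-safe) finite joint distribution. -/
def condMI {A B E : Type*} [Fintype A] [Fintype B] [Fintype E] (p : A → B → E → ℝ) : ℝ :=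
  ∑ e, ∑ a, ∑ b,
    p a b e * Real.log ((p a b e * (∑ a', ∑ b', p a' b' e)) /
      ((∑ b', p a b' e) * (∑ a', p a' b e)))

-- ===== auxiliary development for stmt7 =====

abbrev F22 := Fin 2 × Fin 2

def qf (m : F22 → F22 → ℝ) (x : F22 → ℝ) : ℝ := ∑ p, ∑ q, m p q * x p * x q

def dtf (x : F22 → ℝ) : ℝ := x (0,0) * x (1,1) - x (0,1) * x (1,0)

lemma productize (x : F22 → ℝ) (h : dtf x = 0) :
    ∃ u v : Fin 2 → ℝ, ∀ p, x p = u p.1 * v p.2 := by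
  unfold dtf at h
  simp only [Prod.mk_zero_zero, Prod.mk_one_one] at h
  by_cases ha : x 0 = 0
  · by_cases hb : x (0,1) = 0
    · exact ⟨![0, 1], ![x (1,0), x 1], by
        rintro ⟨i, j⟩
        fin_cases i <;> fin_cases j <;> simp [ha, hb, Prod.mk_zero_zero, Prod.mk_one_one]⟩
    · have hc : x (1,0) = 0 := by
        have h2 : x (0,1) * x (1,0) = 0 := by rw [ha] at h; linarith
        rcases mul_eq_zero.mp h2 with h' | h'
        · exact absurd h' hb
        · exact h'
      exact ⟨![x (0,1), x 1], ![0, 1], by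
        rintro ⟨i, j⟩; fin_cases i <;> fin_cases j <;> simp [ha, hc, Prod.mk_zero_zero, Prod.mk_one_one]⟩
  · refine ⟨![x 0, x (1,0)], ![1, x (0,1) / x 0], ?_⟩
    rintro ⟨i, j⟩
    fin_cases i <;> fin_cases j
    · simp [Prod.mk_zero_zero]
    · simp; field_simp
    · simp
    · simp [Prod.mk_one_one]; field_simp; nlinarith [h]

lemma rotation_lemma (m : F22 → F22 → ℝ)
    (hq0 : ∀ x : F22 → ℝ, dtf x = 0 → 0 ≤ qf m x)
    (x y : F22 → ℝ) (hx : dtf x = 1) (hy : dtf y = -1) :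
    0 ≤ qf m x + qf m y := by
  set f : ℝ → ℝ := fun t => dtf (fun p => Real.cos t * x p + Real.sin t * y p) with hf
  have hcont : ContinuousOn f (Set.Icc 0 (Real.pi/2)) := by
    apply Continuous.continuousOn
    unfold f
    unfold dtf
    fun_prop
  have h0 : f 0 = 1 := by
    unfold dtf at hx
    simp only [hf, dtf, Real.cos_zero, Real.sin_zero]
    simp only [Prod.mk_zero_zero, Prod.mk_one_one] at hx ⊢
    ring_nf
    ring_nf at hx
    linarith
  have hpi : f (Real.pi/2) = -1 := by
    unfold dtf at hy
    simp only [hf, dtf, Real.cos_pi_div_two, Real.sin_pi_div_two]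
    simp only [Prod.mk_zero_zero, Prod.mk_one_one] at hy ⊢
    ring_nf
    ring_nf at hy
    linarith
  have hmem : (0:ℝ) ∈ Set.Icc (f (Real.pi/2)) (f 0) := by
    rw [h0, hpi]; constructor <;> norm_num
  have := intermediate_value_Icc' (by positivity : (0:ℝ) ≤ Real.pi/2) hcont hmem
  obtain ⟨t0, _, ht0⟩ := this
  set c := Real.cos t0
  set s := Real.sin t0
  set A : F22 → ℝ := fun p => c * x p + s * y p with hA
  set B : F22 → ℝ := fun p => -s * x p + c * y p with hB
  have hcs : c^2 + s^2 = 1 := by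
    unfold c s; rw [add_comm]; exact Real.sin_sq_add_cos_sq t0
  have hdA : dtf A = 0 := ht0
  have hdB : dtf B = 0 := by
    have hsum : dtf A + dtf B = (c^2 + s^2) * (dtf x + dtf y) := by
      simp only [hA, hB, dtf]; ring
    rw [hcs, hx, hy] at hsum
    linarith [hdA, hsum]
  have hqsum : qf m A + qf m B = (c^2 + s^2) * (qf m x + qf m y) := by
    simp only [hA, hB, qf, Fintype.sum_prod_type, Fin.sum_univ_two]
    ring
  rw [hcs, one_mul] at hqsum
  have := hq0 A hdA
  have := hq0 B hdB
  linarith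

lemma slemma (m : F22 → F22 → ℝ)
    (hq0 : ∀ x : F22 → ℝ, dtf x = 0 → 0 ≤ qf m x) :
    ∃ u : ℝ, ∀ x : F22 → ℝ, 2 * u * dtf x ≤ qf m x := by
  classical
  set S : Set ℝ := {r | ∃ x : F22 → ℝ, dtf x = 1 ∧ qf m x = r} with hS
  have hqf_smul : ∀ (c : ℝ) (x : F22 → ℝ), qf m (fun p => c * x p) = c^2 * qf m x := by
    intro c x; simp only [qf, Fintype.sum_prod_type, Fin.sum_univ_two]; ring
  have hdtf_smul : ∀ (c : ℝ) (x : F22 → ℝ), dtf (fun p => c * x p) = c^2 * dtf x := by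
    intro c x; simp only [dtf]; ring
  have hne : S.Nonempty := by
    refine ⟨qf m (fun p => if p.1 = p.2 then 1 else 0), fun p => if p.1 = p.2 then 1 else 0, ?_, rfl⟩
    simp [dtf]
  have hyex : dtf (fun p => if p = (0,0) then 1 else if p = (1,1) then -1 else 0) = -1 := by
    simp [dtf]
  have hbdd : BddBelow S := by
    refine ⟨-(qf m (fun p => if p = (0,0) then 1 else if p = (1,1) then -1 else 0)), ?_⟩
    rintro r ⟨x, hx, rfl⟩
    have := rotation_lemma m hq0 x _ hx hyex
    linarith
  set α := sInf S with hα
  refine ⟨α/2, ?_⟩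
  intro x
  rcases lt_trichotomy (dtf x) 0 with hd | hd | hd
  · set sq := Real.sqrt (-dtf x) with hsq
    have hsqpos : 0 < sq := Real.sqrt_pos.mpr (by linarith)
    have hsq2 : sq^2 = -dtf x := Real.sq_sqrt (by linarith)
    set x' : F22 → ℝ := fun p => (1/sq) * x p with hx'
    have hdx' : dtf x' = -1 := by
      rw [hx', hdtf_smul]
      field_simp
      linarith [hsq2]
    have hxs : qf m x = sq^2 * qf m x' := by
      rw [hx', hqf_smul]
      field_simp
    have hlow : ∀ r ∈ S, -qf m x' ≤ r := by
      rintro r ⟨z, hz, rfl⟩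
      have := rotation_lemma m hq0 z x' hz hdx'
      linarith
    have hαge : -qf m x' ≤ α := le_csInf hne hlow
    have hge : -α ≤ qf m x' := by linarith
    rw [hxs]
    calc 2 * (α/2) * dtf x = (-α) * sq^2 := by rw [hsq2]; ring
    _ ≤ qf m x' * sq^2 := by
        apply mul_le_mul_of_nonneg_right hge (sq_nonneg sq)
    _ = sq^2 * qf m x' := by ring
  · rw [hd]
    simpa using hq0 x hd
  · set sq := Real.sqrt (dtf x) with hsq
    have hsqpos : 0 < sq := Real.sqrt_pos.mpr hd
    have hsq2 : sq^2 = dtf x := Real.sq_sqrt (le_of_lt hd)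
    set x' : F22 → ℝ := fun p => (1/sq) * x p with hx'
    have hdx' : dtf x' = 1 := by
      rw [hx', hdtf_smul]; field_simp; linarith [hsq2]
    have hxs : qf m x = sq^2 * qf m x' := by rw [hx', hqf_smul]; field_simp
    have hαle : α ≤ qf m x' := csInf_le hbdd ⟨x', hdx', rfl⟩
    rw [hxs]
    calc 2 * (α/2) * dtf x = α * sq^2 := by rw [hsq2]; ring
    _ ≤ qf m x' * sq^2 := mul_le_mul_of_nonneg_right hαle (sq_nonneg sq)
    _ = sq^2 * qf m x' := by ring

-- ==================== the sigma_y ⊗ sigma_y matrix ====================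

def yre : F22 → F22 → ℝ := fun p q =>
  if p.1 = q.1 then 0 else if p.2 = q.2 then 0 else if p.1 = p.2 then -1 else 1

def Ymat : Qubit2 := fun p q => ((yre p q : ℝ) : ℂ)

lemma yre_qf (x : F22 → ℝ) : (∑ p, ∑ q, yre p q * x p * x q) = -2 * dtf x := by
  simp only [yre, dtf, Fintype.sum_prod_type, Fin.sum_univ_two]
  norm_num
  ring

-- trace-swap identities

lemma trace_mul_ptB (A B : Qubit2) : (A * ptB B).trace = (ptB A * B).trace := by
  simp only [Matrix.trace, Matrix.diag, Matrix.mul_apply, ptB,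
    Fintype.sum_prod_type, Fin.sum_univ_two]
  ring

lemma trace_mul_ptA (A B : Qubit2) : (A * ptA B).trace = (ptA A * B).trace := by
  simp only [Matrix.trace, Matrix.diag, Matrix.mul_apply, ptA,
    Fintype.sum_prod_type, Fin.sum_univ_two]
  ring


set_option maxHeartbeats 2000000 in
/-- Let W be an entanglement witness (Hermitian, Tr(Wσ) ≥ 0 on separable σ)
with W = W^T = W^{T_B}. If ρ is a two-qubit state with Tr(Wρ) < 0, then
Ω = (ρ + ρ^{T_A} + ρ^{T_B} + ρ^T)/4 is not positive semidefinite. -/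
theorem stmt7 (W ρ : Qubit2) (hW : W.IsHermitian)
    (hwit : ∀ σ, SepState σ → 0 ≤ ((W * σ).trace).re)
    (hWT : W = Wᵀ) (hWB : W = ptB W)
    (hρ : ρ.PosSemidef) (hρtr : ρ.trace = 1)
    (hneg : ((W * ρ).trace).re < 0) :
    ¬ (omegaOf ρ).PosSemidef := by
  intro hPSD
  -- entries of W are real
  have hTpt : ∀ p q : F22, W p q = W q p := by
    intro p q; conv_lhs => rw [hWT]
    rfl
  have hwre : ∀ p q : F22, W p q = (((W p q).re : ℝ) : ℂ) := by
    intro p q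
    have h1 : (starRingEnd ℂ) (W q p) = W p q := congrFun (congrFun hW p) q
    have h2 : (starRingEnd ℂ) (W p q) = W p q := by
      rw [hTpt p q] at h1 ⊢
      exact h1
    exact (Complex.conj_eq_iff_re.mp h2).symm
  obtain ⟨wre, hwre'⟩ : ∃ w : F22 → F22 → ℝ, ∀ p q, W p q = ((w p q : ℝ) : ℂ) :=
    ⟨fun p q => (W p q).re, hwre⟩
  clear hwre
  -- trace of W against a real product state
  have htr : ∀ a b : Fin 2 → ℝ,
      (W * outer (tens (fun i => ((a i : ℝ) : ℂ)) (fun i => ((b i : ℝ) : ℂ)))).trace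
        = ((qf wre (fun p => a p.1 * b p.2) : ℝ) : ℂ) := by
    intro a b
    simp only [Matrix.trace, Matrix.diag, Matrix.mul_apply, outer, vecMulVec, tens,
      Matrix.of_apply, Pi.star_apply, Complex.star_def, _root_.map_mul, Complex.conj_ofReal,
      hwre', qf, Fintype.sum_prod_type, Fin.sum_univ_two]
    push_cast
    ring
  -- block positivity of the real quadratic form
  have hblock : ∀ u v : Fin 2 → ℝ, 0 ≤ qf wre (fun p => u p.1 * v p.2) := by
    intro u v
    by_cases hu : u 0 = 0 ∧ u 1 = 0
    · have : qf wre (fun p => u p.1 * v p.2) = 0 := by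
        simp [qf, Fintype.sum_prod_type, Fin.sum_univ_two, hu.1, hu.2]
      rw [this]
    · by_cases hv : v 0 = 0 ∧ v 1 = 0
      · have : qf wre (fun p => u p.1 * v p.2) = 0 := by
          simp [qf, Fintype.sum_prod_type, Fin.sum_univ_two, hv.1, hv.2]
        rw [this]
      · set nu := Real.sqrt (u 0 ^ 2 + u 1 ^ 2) with hnu
        set nv := Real.sqrt (v 0 ^ 2 + v 1 ^ 2) with hnv
        have hnu2 : nu ^ 2 = u 0 ^ 2 + u 1 ^ 2 := Real.sq_sqrt (by positivity)
        have hnv2 : nv ^ 2 = v 0 ^ 2 + v 1 ^ 2 := Real.sq_sqrt (by positivity)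
        have hnupos : 0 < nu := by
          rw [hnu, Real.sqrt_pos]
          rcases not_and_or.mp hu with h | h <;> positivity
        have hnvpos : 0 < nv := by
          rw [hnv, Real.sqrt_pos]
          rcases not_and_or.mp hv with h | h <;> positivity
        set a : Fin 2 → ℝ := fun i => u i / nu with ha
        set b : Fin 2 → ℝ := fun i => v i / nv with hb
        set φ : Fin 2 → ℂ := fun i => ((a i : ℝ) : ℂ) with hφ
        set Φ : Fin 2 → ℂ := fun i => ((b i : ℝ) : ℂ) with hΦ
        have hunitφ : star φ ⬝ᵥ φ = 1 := by
          have : a 0 ^ 2 + a 1 ^ 2 = 1 := by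
            simp only [ha]
            field_simp
            linarith [hnu2]
          simp only [dotProduct, Fin.sum_univ_two, Pi.star_apply, hφ, Complex.star_def,
            Complex.conj_ofReal]
          rw [← Complex.ofReal_mul, ← Complex.ofReal_mul, ← Complex.ofReal_add]
          rw [show a 0 * a 0 + a 1 * a 1 = a 0 ^2 + a 1 ^2 by ring, this]
          norm_num
        have hunitΦ : star Φ ⬝ᵥ Φ = 1 := by
          have : b 0 ^ 2 + b 1 ^ 2 = 1 := by
            simp only [hb]
            field_simp
            linarith [hnv2]
          simp only [dotProduct, Fin.sum_univ_two, Pi.star_apply, hΦ, Complex.star_def,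
            Complex.conj_ofReal]
          rw [← Complex.ofReal_mul, ← Complex.ofReal_mul, ← Complex.ofReal_add]
          rw [show b 0 * b 0 + b 1 * b 1 = b 0 ^2 + b 1 ^2 by ring, this]
          norm_num
        set σ : Qubit2 := ∑ _i : Fin 1, (((1:ℝ) : ℂ)) • outer (tens φ Φ) with hσ
        have hsep : SepState σ :=
          ⟨1, fun _ => 1, fun _ => φ, fun _ => Φ, fun _ => zero_le_one, by simp,
            fun _ => hunitφ, fun _ => hunitΦ, by simp [hσ]⟩
        have hw := hwit σ hsep
        have hσ2 : σ = outer (tens φ Φ) := by simp [hσ]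
        rw [hσ2, htr a b] at hw
        rw [Complex.ofReal_re] at hw
        -- now scale back
        have hscale : (fun p : F22 => u p.1 * v p.2) = (fun p : F22 => (nu * nv) * (a p.1 * b p.2)) := by
          funext p
          simp only [ha, hb]
          field_simp
        rw [hscale]
        have hqs : qf wre (fun p : F22 => (nu*nv) * (a p.1 * b p.2))
            = (nu*nv)^2 * qf wre (fun p : F22 => a p.1 * b p.2) := by
          simp only [qf, Fintype.sum_prod_type, Fin.sum_univ_two]; ring
        rw [hqs]
        positivity
  -- block positivity on the determinant-zero cone
  have hq0 : ∀ x : F22 → ℝ, dtf x = 0 → 0 ≤ qf wre x := by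
    intro x hx
    obtain ⟨u, v, huv⟩ := productize x hx
    have hx' : x = fun p => u p.1 * v p.2 := funext huv
    rw [hx']
    exact hblock u v
  obtain ⟨u, hu⟩ := slemma wre hq0
  set M : Qubit2 := W + (u:ℂ) • Ymat with hM
  have hMre : ∀ p q : F22, M p q = ((wre p q + u * yre p q : ℝ) : ℂ) := by
    intro p q
    simp only [hM, Matrix.add_apply, Matrix.smul_apply, Ymat, hwre', smul_eq_mul]
    push_cast
    ring
  -- the quadratic form of M is pointwise nonnegative (real part)
  have hdiag : ∀ z : F22 → ℂ,
      0 ≤ (∑ p, ∑ q, (starRingEnd ℂ) (z p) * M p q * z q).re := by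
    intro z
    set ar : F22 → ℝ := fun p => (z p).re with har
    set br : F22 → ℝ := fun p => (z p).im with hbr
    have hkey : (∑ p, ∑ q, (starRingEnd ℂ) (z p) * M p q * z q).re
        = (qf wre ar - 2*u*dtf ar) + (qf wre br - 2*u*dtf br) := by
      have hyq1 := yre_qf ar
      have hyq2 := yre_qf br
      simp only [qf, Fintype.sum_prod_type, Fin.sum_univ_two] at hyq1 hyq2 ⊢
      simp only [hMre, Complex.add_re, Complex.mul_re, Complex.mul_im,
        Complex.conj_re, Complex.conj_im, Complex.ofReal_re, Complex.ofReal_im,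
        har, hbr]
      simp only [yre] at hyq1 hyq2 ⊢
      norm_num at hyq1 hyq2 ⊢
      unfold dtf at hyq1 hyq2 ⊢
      simp only [Prod.mk_zero_zero, Prod.mk_one_one] at hyq1 hyq2 ⊢
      linear_combination u * hyq1 + u * hyq2
    rw [hkey]
    have h1 := hu ar
    have h2 := hu br
    linarith
  -- trace of M against the PSD matrix Ω is nonnegative
  obtain ⟨Bm, hBm⟩ : ∃ B : Qubit2, omegaOf ρ = Bᴴ * B := by
    open scoped MatrixOrder in exact CStarAlgebra.nonneg_iff_eq_star_mul_self.mp hPSD.nonneg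
  have htrM : (M * omegaOf ρ).trace = (Bm * M * Bmᴴ).trace := by
    rw [hBm, ← Matrix.mul_assoc, Matrix.trace_mul_comm, ← Matrix.mul_assoc]
  have hretr : 0 ≤ ((M * omegaOf ρ).trace).re := by
    rw [htrM]
    have hdiagEq : ∀ i : F22, (Bm * M * Bmᴴ) i i
        = ∑ p, ∑ q, (starRingEnd ℂ) ((fun r => (starRingEnd ℂ) (Bm i r)) p) * M p q
            * ((fun r => (starRingEnd ℂ) (Bm i r)) q) := by
      intro i
      simp only [Matrix.mul_apply, Matrix.conjTranspose_apply, Complex.star_def,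
        Fintype.sum_prod_type, Fin.sum_univ_two, Complex.conj_conj]
      ring
    have : ((Bm * M * Bmᴴ).trace).re = ∑ i : F22, ((Bm * M * Bmᴴ) i i).re := by
      simp [Matrix.trace, Matrix.diag, Complex.re_sum]
    rw [this]
    apply Finset.sum_nonneg
    intro i _
    rw [hdiagEq i]
    exact hdiag _
  -- trace identities
  have hBpt : ∀ a b c d : Fin 2, W (a,b) (c,d) = W (a,d) (c,b) := by
    intro a b c d
    exact congrFun (congrFun hWB (a,b)) (c,d)
  have hAW : ptA W = W := by
    ext ⟨a,b⟩ ⟨c,d⟩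
    show W (c,b) (a,d) = W (a,b) (c,d)
    exact (hTpt (c,b) (a,d)).trans (hBpt a b c d).symm
  have hBW : ptB W = W := hWB.symm
  have htW : (W * omegaOf ρ).trace = (W * ρ).trace := by
    unfold omegaOf
    rw [Matrix.mul_smul, Matrix.trace_smul, Matrix.mul_add, Matrix.mul_add, Matrix.mul_add,
      Matrix.trace_add, Matrix.trace_add, Matrix.trace_add, trace_mul_ptA, trace_mul_ptB,
      hAW, hBW]
    have h4 : (W * ρᵀ).trace = (W * ρ).trace := by
      rw [← Matrix.trace_transpose (W * ρᵀ), Matrix.transpose_mul, Matrix.transpose_transpose,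
        Matrix.trace_mul_comm, ← hWT]
    rw [h4, smul_eq_mul]
    ring
  have htY : (Ymat * omegaOf ρ).trace = 0 := by
    unfold omegaOf
    simp only [Matrix.trace, Matrix.diag, Matrix.mul_apply, Matrix.smul_apply,
      Matrix.add_apply, Matrix.transpose_apply, ptA, ptB, Ymat, yre,
      Fintype.sum_prod_type, Fin.sum_univ_two]
    norm_num
    ring
  have e1 : (M * omegaOf ρ).trace = (W * ρ).trace := by
    rw [hM, Matrix.add_mul, Matrix.trace_add, htW, Matrix.smul_mul, Matrix.trace_smul, htY]
    simp
  rw [e1] at hretr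
  linarith


end
end

section
/- For any entangled unit vector |φ_e⟩ ∈ C^2 ⊗ C^2, the partial transpose |φ_e⟩⟨φ_e|^{T_B} has at least one negative eigenvalue. -/
open Matrix Complex BigOperators Kronecker ComplexOrder

noncomputable section

lemma prod_of_det (φ : Fin 2 × Fin 2 → ℂ)
    (hd : φ (0,0) * φ (1,1) - φ (0,1) * φ (1,0) = 0) :
    ∃ (a b : Fin 2 → ℂ), φ = tens a b := by
  set a := φ (0,0) with ha'; set b := φ (0,1) with hb'
  set c := φ (1,0) with hc'; set e := φ (1,1) with he'
  by_cases ha : a = 0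
  · by_cases hb : b = 0
    · refine ⟨![0,1], ![c,e], ?_⟩
      funext p
      fin_cases p
      · show a = tens ![0,1] ![c,e] (0,0); simp [tens, ha]
      · show b = tens ![0,1] ![c,e] (0,1); simp [tens, hb]
      · show c = tens ![0,1] ![c,e] (1,0); simp [tens]
      · show e = tens ![0,1] ![c,e] (1,1); simp [tens]
    · have hc : c = 0 := by
        have h2 : b * c = 0 := by linear_combination e * ha - hd
        rcases mul_eq_zero.1 h2 with h | h
        · exact absurd h hb
        · exact h
      refine ⟨![1, e/b], ![a, b], ?_⟩
      funext p
      fin_cases p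
      · show a = tens ![1, e/b] ![a, b] (0,0); simp [tens]
      · show b = tens ![1, e/b] ![a, b] (0,1); simp [tens]
      · show c = tens ![1, e/b] ![a, b] (1,0); simp [tens, hc, ha]
      · show e = tens ![1, e/b] ![a, b] (1,1); simp [tens]; field_simp
  · refine ⟨![1, c/a], ![a, b], ?_⟩
    funext p
    fin_cases p
    · show a = tens ![1, c/a] ![a, b] (0,0); simp [tens]
    · show b = tens ![1, c/a] ![a, b] (0,1); simp [tens]
    · show c = tens ![1, c/a] ![a, b] (1,0); simp [tens]; field_simp
    · show e = tens ![1, c/a] ![a, b] (1,1); simp [tens]; field_simp; linear_combination hd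

/-- For any entangled unit vector |φ_e⟩ ∈ C^2 ⊗ C^2, the partial transpose
|φ_e⟩⟨φ_e|^{T_B} has a negative eigenvalue. -/
theorem stmt13 (φ : Fin 2 × Fin 2 → ℂ) (hunit : star φ ⬝ᵥ φ = 1)
    (hent : ¬ ∃ (a b : Fin 2 → ℂ), φ = tens a b) :
    ∃ (μ : ℝ) (v : Fin 2 × Fin 2 → ℂ), μ < 0 ∧ v ≠ 0 ∧
      ptB (outer φ) *ᵥ v = (μ : ℂ) • v := by
  have hdne : φ (0,0) * φ (1,1) - φ (0,1) * φ (1,0) ≠ 0 := fun h => hent (prod_of_det φ h)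
  obtain ⟨r, hr⟩ : ∃ r : ℝ, r = ‖φ (0,0) * φ (1,1) - φ (0,1) * φ (1,0)‖ := ⟨_, rfl⟩
  have hrpos : 0 < r := hr ▸ (norm_pos_iff.mpr hdne)
  have hrne : (r : ℂ) ≠ 0 := by exact_mod_cast ne_of_gt (by exact_mod_cast hrpos)
  obtain ⟨s, hs⟩ : ∃ s : ℂ, s = (φ (0,0) * φ (1,1) - φ (0,1) * φ (1,0)) / r := ⟨_, rfl⟩
  have hnsq : ((Complex.normSq (φ (0,0) * φ (1,1) - φ (0,1) * φ (1,0)) : ℝ) : ℂ)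
      = (r : ℂ) * (r : ℂ) := by
    rw [← Complex.sq_norm, ← hr]; push_cast; ring
  have hs2 : (r : ℂ) * s = φ (0,0) * φ (1,1) - φ (0,1) * φ (1,0) := by
    rw [hs]; field_simp
  have hs1 : s * ((starRingEnd ℂ) (φ (0,0)) * (starRingEnd ℂ) (φ (1,1))
      - (starRingEnd ℂ) (φ (0,1)) * (starRingEnd ℂ) (φ (1,0))) = (r : ℂ) := by
    have hconj : (starRingEnd ℂ) (φ (0,0)) * (starRingEnd ℂ) (φ (1,1))
        - (starRingEnd ℂ) (φ (0,1)) * (starRingEnd ℂ) (φ (1,0))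
        = (starRingEnd ℂ) (φ (0,0) * φ (1,1) - φ (0,1) * φ (1,0)) := by
      simp [_root_.map_mul, map_sub]
    rw [hconj, hs, div_mul_eq_mul_div, Complex.mul_conj, hnsq]
    field_simp
  have hss : s * (starRingEnd ℂ) s = 1 := by
    rw [Complex.mul_conj, hs, Complex.normSq_div]
    push_cast
    rw [Complex.normSq_ofReal, ← Complex.sq_norm, ← hr]
    field_simp
  refine ⟨-r, fun p => !![ -φ (0,1) + s * (starRingEnd ℂ) (φ (1,0)),
        φ (0,0) + s * (starRingEnd ℂ) (φ (1,1));
        -φ (1,1) - s * (starRingEnd ℂ) (φ (0,0)),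
        φ (1,0) - s * (starRingEnd ℂ) (φ (0,1)) ] p.1 p.2,
      by linarith, ?_, ?_⟩
  · intro h0
    have h00 := congrFun h0 (0,0)
    have h01 := congrFun h0 (0,1)
    simp only [Pi.zero_apply] at h00 h01
    simp at h00 h01
    have h01c := congrArg (starRingEnd ℂ) h01
    have h00c := congrArg (starRingEnd ℂ) h00
    simp only [map_add, _root_.map_mul, map_sub, map_neg, map_zero, Complex.conj_conj] at h01c h00c
    have hkey : (r : ℂ) = -(φ (1,1) * (starRingEnd ℂ) (φ (1,1))
        + φ (1,0) * (starRingEnd ℂ) (φ (1,0))) := by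
      linear_combination -hs1 + s * (starRingEnd ℂ) (φ (1,1)) * h01c
        + s * (starRingEnd ℂ) (φ (1,0)) * h00c
        - (φ (1,1) * (starRingEnd ℂ) (φ (1,1)) + φ (1,0) * (starRingEnd ℂ) (φ (1,0))) * hss
    rw [Complex.mul_conj, Complex.mul_conj] at hkey
    have hre : r = -(Complex.normSq (φ (1,1)) + Complex.normSq (φ (1,0))) := by exact_mod_cast hkey
    nlinarith [Complex.normSq_nonneg (φ (1,1)), Complex.normSq_nonneg (φ (1,0))]
  · funext p
    fin_cases p
    · simp [Matrix.mulVec, dotProduct, Fintype.sum_prod_type, Fin.sum_univ_two,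
        ptB, outer, Matrix.vecMulVec_apply, Complex.star_def]
      linear_combination (φ (0,1)) * hs1 + (starRingEnd ℂ) (φ (1,0)) * hs2
    · simp [Matrix.mulVec, dotProduct, Fintype.sum_prod_type, Fin.sum_univ_two,
        ptB, outer, Matrix.vecMulVec_apply, Complex.star_def]
      linear_combination (-(φ (0,0))) * hs1 + (starRingEnd ℂ) (φ (1,1)) * hs2
    · simp [Matrix.mulVec, dotProduct, Fintype.sum_prod_type, Fin.sum_univ_two,
        ptB, outer, Matrix.vecMulVec_apply, Complex.star_def]
      linear_combination (φ (1,1)) * hs1 - (starRingEnd ℂ) (φ (0,0)) * hs2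
    · simp [Matrix.mulVec, dotProduct, Fintype.sum_prod_type, Fin.sum_univ_two,
        ptB, outer, Matrix.vecMulVec_apply, Complex.star_def]
      linear_combination (-(φ (1,0))) * hs1 - (starRingEnd ℂ) (φ (0,1)) * hs2


end
end

section
/- Let U(θ) = cos θ · I − i sin θ · σ_y act on the second qubit of the maximally entangled state |Φ⁺⟩ = (|00⟩ + |11⟩)/√2, giving ρ(θ) = (I ⊗ U(θ)) |Φ⁺⟩⟨Φ⁺| (I ⊗ U(θ))†. Then for every θ there exists a Hermitian W in the real span of {σ_i ⊗ σ_j : i,j ∈ {0,x,z}} with Tr(Wσ) ≥ 0 for all separable σ and Tr(W ρ(θ)) = −1/4. -/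
open Matrix Complex BigOperators Kronecker ComplexOrder

noncomputable section

/-- The unitary U(θ) = cos θ · I − i sin θ · σ_y. -/
def Uθ (θ : ℝ) : Matrix (Fin 2) (Fin 2) ℂ :=
  (Real.cos θ : ℂ) • (1 : Matrix (Fin 2) (Fin 2) ℂ) - (I * (Real.sin θ : ℂ)) • σy

/-- The maximally entangled state |Φ⁺⟩ = (|00⟩ + |11⟩)/√2. -/
def phiPlus : Fin 2 × Fin 2 → ℂ := fun p => if p.1 = p.2 then (1 / Real.sqrt 2 : ℝ) else 0



/-- Coefficients of the entanglement witness, as functions of sin θ and cos θ. -/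
def cfM (s c : ℝ) : Fin 3 → Fin 3 → ℝ :=
  ![![1/4, 0, 0], ![0, -(c^2 - s^2)/4, 2*s*c/4], ![0, -(2*s*c)/4, -(c^2 - s^2)/4]]

lemma norm_extract (φ : Fin 2 → ℂ) (h : star φ ⬝ᵥ φ = 1) :
    (φ 0).re^2 + (φ 0).im^2 + (φ 1).re^2 + (φ 1).im^2 = 1 := by
  have := congrArg Complex.re h
  simp [dotProduct, Fin.sum_univ_two, Complex.mul_re] at this
  ring_nf
  ring_nf at this
  linarith

lemma aux_rot (s c xa za xb zb : ℝ) (h3 : s^2+c^2 = 1) (hu : xa^2+za^2 ≤ 1) (hw : xb^2+zb^2 ≤ 1) :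
    0 ≤ 1 + (-(c^2-s^2)*(xa*xb+za*zb) + (2*s*c)*(xa*zb-za*xb)) := by
  have hK : ((c^2-s^2)^2 + (2*s*c)^2) * (xb^2+zb^2) = xb^2+zb^2 := by
    have : (c^2-s^2)^2 + (2*s*c)^2 = 1 := by nlinarith [h3]
    rw [this]; ring
  nlinarith [sq_nonneg (xa - (c^2-s^2)*xb + 2*s*c*zb), sq_nonneg (za - 2*s*c*xb - (c^2-s^2)*zb), hK]

lemma bloch (a b : ℂ) (h : a.re^2 + a.im^2 + b.re^2 + b.im^2 = 1) :
    (2*(a.re*b.re + a.im*b.im))^2 + (a.re^2+a.im^2-b.re^2-b.im^2)^2 ≤ 1 := by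
  nlinarith [sq_nonneg (a.re*b.im - a.im*b.re)]

set_option maxHeartbeats 1000000 in
lemma prod_nonneg' (s c : ℝ) (h3 : s^2 + c^2 = 1) (φ Φ : Fin 2 → ℂ)
    (hφ : star φ ⬝ᵥ φ = 1) (hΦ : star Φ ⬝ᵥ Φ = 1) :
    0 ≤ (((∑ i, ∑ j, ((cfM s c i j : ℝ) : ℂ) • (pauli3 i ⊗ₖ pauli3 j)) * outer (tens φ Φ)).trace).re := by
  have h1 := norm_extract φ hφ
  have h2 := norm_extract Φ hΦ
  have hu := bloch (φ 0) (φ 1) h1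
  have hw := bloch (Φ 0) (Φ 1) h2
  have key := aux_rot s c
    (2*((φ 0).re*(φ 1).re + (φ 0).im*(φ 1).im)) ((φ 0).re^2+(φ 0).im^2-(φ 1).re^2-(φ 1).im^2)
    (2*((Φ 0).re*(Φ 1).re + (Φ 0).im*(Φ 1).im)) ((Φ 0).re^2+(Φ 0).im^2-(Φ 1).re^2-(Φ 1).im^2)
    h3 hu hw
  have h12 : ((φ 0).re^2 + (φ 0).im^2 + (φ 1).re^2 + (φ 1).im^2) * ((Φ 0).re^2 + (Φ 0).im^2 + (Φ 1).re^2 + (Φ 1).im^2) = 1 := by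
    rw [h1, h2]; ring
  simp only [cfM, pauli3, σx, σz, outer, tens, Matrix.trace, Matrix.mul_apply, Fintype.sum_prod_type,
    Fin.sum_univ_three, Fin.sum_univ_two, Matrix.diag_apply, Matrix.sum_apply, Matrix.smul_apply,
    Matrix.kroneckerMap_apply, Matrix.vecMulVec_apply, Matrix.cons_val_zero, Matrix.cons_val_one,
    Matrix.head_cons, Matrix.one_apply, Pi.star_apply, smul_eq_mul, Prod.mk.injEq,
    Matrix.vecHead, Matrix.vecTail, Matrix.cons_val]
  norm_num [Matrix.one_apply, Matrix.vecHead, Matrix.vecTail, Prod.ext_iff, Complex.mul_re, Complex.mul_im,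
    ← Complex.ofReal_pow, Complex.ofReal_re, Complex.ofReal_im]
  linarith [key, h12]

set_option maxHeartbeats 1000000 in
lemma witness_herm (s c : ℝ) :
    (∑ i, ∑ j, ((cfM s c i j : ℝ) : ℂ) • (pauli3 i ⊗ₖ pauli3 j)).IsHermitian := by
  show _ᴴ = _
  ext ⟨i,j⟩ ⟨k,l⟩
  fin_cases i <;> fin_cases j <;> fin_cases k <;> fin_cases l <;>
    simp [cfM, pauli3, σx, σz, Fin.sum_univ_three,
      Matrix.sum_apply, Matrix.conjTranspose_apply, Matrix.smul_apply,
      Matrix.kroneckerMap_apply, Matrix.one_apply, Prod.ext_iff, Matrix.vecHead, Matrix.vecTail]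

set_option maxHeartbeats 1000000 in
lemma witness_trace (θ : ℝ) :
    ((((∑ i, ∑ j, ((cfM (Real.sin θ) (Real.cos θ) i j : ℝ) : ℂ) • (pauli3 i ⊗ₖ pauli3 j)))
      * outer (((1 : Matrix (Fin 2) (Fin 2) ℂ) ⊗ₖ Uθ θ) *ᵥ phiPlus)).trace).re = -(1/4) := by
  have h3 := Real.sin_sq_add_cos_sq θ
  have hs : Real.sqrt 2 * Real.sqrt 2 = 2 := Real.mul_self_sqrt (by norm_num)
  simp only [cfM, pauli3, σx, σz, σy, Uθ, phiPlus, outer, Matrix.trace, Matrix.mul_apply,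
    Matrix.mulVec, dotProduct, Fintype.sum_prod_type,
    Fin.sum_univ_three, Fin.sum_univ_two, Matrix.diag_apply, Matrix.sum_apply, Matrix.smul_apply,
    Matrix.kroneckerMap_apply, Matrix.vecMulVec_apply, Matrix.cons_val_zero, Matrix.cons_val_one,
    Matrix.head_cons, Matrix.one_apply, Pi.star_apply, smul_eq_mul, Prod.mk.injEq,
    Matrix.vecHead, Matrix.vecTail, Matrix.sub_apply, Matrix.of_apply, Matrix.cons_val', Matrix.empty_val', Matrix.cons_val]
  norm_num [Matrix.one_apply, Matrix.vecHead, Matrix.vecTail, Prod.ext_iff, Complex.mul_re, Complex.mul_im,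
    ← Complex.ofReal_pow, Complex.ofReal_re, Complex.ofReal_im,
    Complex.cos_ofReal_re, Complex.sin_ofReal_re]
  linear_combination ((2*(Real.sin θ^2+Real.cos θ^2) - 4*(Real.sin θ^2+Real.cos θ^2)^2)/16) * hs
    - ((2*(Real.sin θ^2+Real.cos θ^2)+1)/4) * h3

/-- For ρ(θ) = (I ⊗ U(θ))|Φ⁺⟩⟨Φ⁺|(I ⊗ U(θ))†, for every θ there is a Hermitian
W in span_ℝ{σ_i ⊗ σ_j : i,j ∈ {0,x,z}} with Tr(Wσ) ≥ 0 on separable σ and Tr(Wρ(θ)) = −1/4. -/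
theorem stmt14 (θ : ℝ) :
    ∃ W : Qubit2, W.IsHermitian ∧
      (∃ c : Fin 3 → Fin 3 → ℝ, W = ∑ i, ∑ j, (c i j : ℂ) • (pauli3 i ⊗ₖ pauli3 j)) ∧
      (∀ σ, SepState σ → 0 ≤ ((W * σ).trace).re) ∧
      ((W * outer (((1 : Matrix (Fin 2) (Fin 2) ℂ) ⊗ₖ Uθ θ) *ᵥ phiPlus)).trace).re
        = -(1/4) := by
  refine ⟨∑ i, ∑ j, ((cfM (Real.sin θ) (Real.cos θ) i j : ℝ) : ℂ) • (pauli3 i ⊗ₖ pauli3 j),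
    witness_herm _ _, ⟨cfM (Real.sin θ) (Real.cos θ), rfl⟩, ?_, witness_trace θ⟩
  rintro σ ⟨n, q, φv, Φv, hq, hqsum, hφn, hΦn, rfl⟩
  rw [Finset.mul_sum]
  simp only [Matrix.mul_smul, Matrix.trace_sum, Matrix.trace_smul, smul_eq_mul, Complex.re_sum,
    Complex.re_ofReal_mul]
  exact Finset.sum_nonneg fun i _ => mul_nonneg (hq i)
    (prod_nonneg' _ _ (Real.sin_sq_add_cos_sq θ) _ _ (hφn i) (hΦn i))

end
end
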